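/- arXiv:1510.02637 — 3 statements merged into one kernel-verified Lean document; each statement's English description precedes it below -/
import Mathlib

section
/- If w is a self-minimal word of length n over Σ and d is a positive divisor of n, then (w_(d))^(n/d) ≤ w in the lexicographic order. -/
/-!
Let `u = w_(d)` and suppose `w < u^k`. If `u^m` with `m < k` is a prefix of `w`, let `x` be the
block of `|u|` letters following it. Comparing `w = u^m x ⋯` with `u^k = u^m u ⋯` gives
`x ≤ u`, and `x < u` is impossible because the rotation of `w` starting at `x` would then be
smaller than `w = u ⋯`. So `x = u`, and inductively `u^k` is a prefix of `w`, contradicting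
`w < u^k`.
-/

namespace Lyndon

variable {α : Type*}

/-- `rot w c` is the cyclic rotation of `w` obtained by moving its first `c mod |w|`
letters to the end. -/
def rot (w : List α) (c : ℕ) : List α :=
  w.drop (c % w.length) ++ w.take (c % w.length)

/-- `power w k` is the concatenation of `k` copies of `w`. -/
def power (w : List α) (k : ℕ) : List α := (List.replicate k w).flatten

/-- `minrot w` is the lexicographically minimal cyclic rotation of `w`. -/
def minrot [LinearOrder α] (w : List α) : List α :=
  ((List.range w.length).map (rot w)).foldr min w

/-- A word is self-minimal if it equals its minimal cyclic rotation. -/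
def SelfMinimal [LinearOrder α] (w : List α) : Prop := minrot w = w

/-- A word is primitive if it is a `k`-th power (for a positive integer `k`)
only of itself. -/
def Primitive (w : List α) : Prop :=
  ∀ (u : List α) (k : ℕ), 0 < k → w = power u k → u = w

/-- A Lyndon word is a nonempty word that is primitive and self-minimal. -/
def IsLyndon [LinearOrder α] (w : List α) : Prop :=
  w ≠ [] ∧ Primitive w ∧ SelfMinimal w

/-- `Pref₋(w)`: the words `w_(i)·s` for `0 ≤ i ≤ n-1` and a letter `s < w[i+1]`,
together with `w` itself. -/
def PrefMinus [LinearOrder α] (w : List α) : Set (List α) :=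
  {y | (∃ i : Fin w.length, ∃ s : α, s < w.get i ∧ y = w.take i ++ [s]) ∨ y = w}

/-- `L(w)`: the words containing a factor (contiguous subword) from `Pref₋(w)`. -/
def InL [LinearOrder α] (w x : List α) : Prop :=
  ∃ y ∈ PrefMinus w, y <:+: x

theorem foldr_min_le_of_mem [LinearOrder α] (b : α) {l : List α} {x : α} (hx : x ∈ l) :
    l.foldr min b ≤ x := by
  induction l with
  | nil => cases hx
  | cons a l ih =>
    rcases List.mem_cons.1 hx with rfl | h
    · exact min_le_left _ _
    · exact (min_le_right _ _).trans (ih h)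

theorem power_add (u : List α) (m k : ℕ) : power u (m + k) = power u m ++ power u k := by
  simp only [power, List.replicate_add, List.flatten_append]

theorem power_succ (u : List α) (m : ℕ) : power u (m + 1) = power u m ++ u := by
  rw [power_add]
  simp [power]

theorem length_power (u : List α) (k : ℕ) : (power u k).length = k * u.length := by
  induction k with
  | zero => simp [power]
  | succ k ih => rw [power_succ, List.length_append, ih, Nat.succ_mul]

section Lex

variable [LinearOrder α] {a b : List α}

theorem lt_of_append_lt_append_left {p : List α} (h : p ++ a < p ++ b) : a < b :=
  lt_of_not_ge fun hba => List.append_left_le (l₁ := p) (not_lt.2 hba) h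

theorem append_lt_append_of_lt_of_length_eq (h : a < b) (hlen : a.length = b.length)
    (c e : List α) : a ++ c < b ++ e := by
  induction a generalizing b with
  | nil => cases b <;> simp_all
  | cons x a ih =>
    cases b with
    | nil => simp at hlen
    | cons y b =>
      rcases List.cons_lt_cons_iff.1 h with hxy | ⟨rfl, hab⟩
      · exact List.cons_lt_cons_iff.2 (Or.inl hxy)
      · exact List.cons_lt_cons_iff.2 (Or.inr ⟨rfl, ih hab (by simpa using hlen)⟩)

theorem le_of_append_lt_append_of_length_eq {c e : List α} (hlen : a.length = b.length)
    (h : a ++ c < b ++ e) : a ≤ b :=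
  le_of_not_gt fun hba => (append_lt_append_of_lt_of_length_eq hba hlen.symm e c).not_gt h

end Lex

section SelfMinimal

variable [LinearOrder α] {w : List α}

theorem SelfMinimal.le_rotate (hsm : SelfMinimal w) (j : ℕ) : w ≤ w.rotate j := by
  rcases eq_or_ne w [] with rfl | hw
  · simp
  have hj : j % w.length < w.length := Nat.mod_lt _ (List.length_pos_iff.2 hw)
  have hmem : rot w (j % w.length) ∈ (List.range w.length).map (rot w) :=
    List.mem_map.2 ⟨_, List.mem_range.2 hj, rfl⟩
  have hrot : rot w (j % w.length) = w.rotate j := by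
    rw [← List.rotate_mod, rot, Nat.mod_mod, List.rotate_eq_drop_append_take hj.le]
  calc w = minrot w := hsm.symm
    _ ≤ w.rotate j := hrot ▸ foldr_min_le_of_mem w hmem

/-- Otherwise `x < u`, and the rotation `x ++ (y ++ p)` of `w` would be smaller than `w`. -/
theorem SelfMinimal.eq_of_lt_append {p x y u z : List α} (hsm : SelfMinimal (p ++ (x ++ y)))
    (hu : u <+: p ++ (x ++ y)) (hlt : p ++ (x ++ y) < p ++ (u ++ z))
    (hlen : x.length = u.length) : x = u := by
  by_contra hne
  have hxu : x < u :=
    (le_of_append_lt_append_of_length_eq hlen (lt_of_append_lt_append_left hlt)).lt_of_ne hne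
  obtain ⟨s, hs⟩ := hu
  have hrot := hsm.le_rotate p.length
  rw [List.rotate_append_length_eq, ← hs, List.append_assoc] at hrot
  exact hrot.not_gt (append_lt_append_of_lt_of_length_eq hxu hlen _ _)

theorem SelfMinimal.power_isPrefix_of_lt {u : List α} {k : ℕ} (hsm : SelfMinimal w)
    (hu : u <+: w) (hlt : w < power u k) :
    ∀ m ≤ k, m * u.length ≤ w.length → power u m <+: w
  | 0, _, _ => by simp [power]
  | m + 1, hm, hlen => by
    obtain ⟨t, rfl⟩ := hsm.power_isPrefix_of_lt hu hlt m (by omega)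
      (le_trans (Nat.mul_le_mul_right _ m.le_succ) hlen)
    have hxlen : (t.take u.length).length = u.length := by
      simp only [List.length_take, List.length_append, length_power] at hlen ⊢
      rw [Nat.succ_mul] at hlen
      omega
    rw [← List.take_append_drop u.length t] at hsm hu hlt ⊢
    have hsplit : power u k = power u m ++ (u ++ power u (k - (m + 1))) := by
      rw [← List.append_assoc, ← power_succ, ← power_add]
      congr 1
      omega
    rw [hsplit] at hlt
    rw [power_succ, hsm.eq_of_lt_append hu hlt hxlen, ← List.append_assoc]
    exact List.prefix_append _ _

theorem SelfMinimal.power_le {u : List α} {k : ℕ} (hsm : SelfMinimal w) (hu : u <+: w)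
    (hk : k * u.length ≤ w.length) : power u k ≤ w :=
  not_lt.1 fun hlt => (hsm.power_isPrefix_of_lt hu hlt k le_rfl hk).le hlt

end SelfMinimal

theorem stmt_0_general [LinearOrder α]
    (w : List α) (n d : ℕ) (hw : w.length = n) (hsm : SelfMinimal w) :
    power (w.take d) (n / d) ≤ w := by
  subst hw
  refine hsm.power_le (List.take_prefix d w) ?_
  calc w.length / d * (w.take d).length ≤ w.length / d * d :=
        Nat.mul_le_mul_left _ (List.length_take_le d w)
    _ ≤ w.length := Nat.div_mul_le_self _ _

/-- If `w` is a self-minimal word of length `n` and `d` is a positive divisor of `n`,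
then `(w_(d))^(n/d) ≤ w` in the lexicographic order. -/
theorem stmt_0 [LinearOrder α] [Fintype α] [Nonempty α]
    (w : List α) (n d : ℕ) (hw : w.length = n) (hsm : SelfMinimal w)
    (hd : d ∣ n) (hd0 : 0 < d) :
    power (w.take d) (n / d) ≤ w :=
  stmt_0_general w n d hw hsm

end Lyndon
end

section
/- Let z be the maximal letter of Σ. Let x = y·c·u and x' = y·d·v, where c, d ∈ Σ with c < d, y and u are words over Σ, and v = z^(|u|). If x is self-minimal, then x' is self-minimal. -/
namespace Lyndon

variable {α : Type*}

/-!
`rot` is `List.rotate`. Let `x' = y·d·z^m` and `0 < i < |x'|`. If `i ≤ |y|`, write `s` for `y`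
without its first `i` letters: on their first `|y| - i + 1` letters, `x` and `x'` both read
`y_(|y|-i+1)`, while their rotations by `i` read `s·c`, resp. `s·d`. So `x ≤ rot x i` forces
`x' < rot x' i` already on this prefix. If `i > |y|`, the rotation starts with the maximal
letter `z`, whereas `x'` starts with `d < z` or with `y[1] ≤ c < z` (by `x ≤ rot x |y|`),
unless `x' = z^(m+1)`, which is invariant under rotation.
-/

theorem _root_.List.rotate_append_of_le_length {p : List α} (q : List α) {i : ℕ}
    (h : i ≤ p.length) : (p ++ q).rotate i = p.drop i ++ q ++ p.take i := by
  rw [List.rotate_eq_drop_append_take (by grind), List.drop_append_of_le_length h,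
    List.take_append_of_le_length h]

theorem _root_.List.exists_rotate_append_replicate_eq_cons (p : List α) (a : α) {k i : ℕ}
    (hp : p.length ≤ i) (hi : i < p.length + k) :
    ∃ t, (p ++ List.replicate k a).rotate i = a :: t := by
  rw [List.rotate_eq_drop_append_take (by grind), List.drop_append,
    List.drop_of_length_le hp, List.drop_replicate, List.nil_append,
    show k - (i - p.length) = k - (i - p.length) - 1 + 1 by omega, List.replicate_succ]
  exact ⟨_, rfl⟩

theorem _root_.List.lt_of_take_lt [LinearOrder α] {s t : List α} {k : ℕ}
    (h : s.take k < t.take k) : s < t := by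
  induction k generalizing s t with
  | zero => exact absurd h (List.lt_irrefl _)
  | succ k ih =>
    match s, t with
    | [], [] => exact absurd h (List.lt_irrefl _)
    | [], b :: t => exact List.nil_lt_cons b t
    | a :: s, [] => exact absurd h (List.not_lt_nil _)
    | a :: s, b :: t =>
      rcases List.cons_lt_cons_iff.mp h with hab | ⟨rfl, hst⟩
      · exact List.cons_lt_cons_iff.mpr (.inl hab)
      · exact List.cons_lt_cons_iff.mpr (.inr ⟨rfl, ih hst⟩)

theorem _root_.List.take_le_take_of_le [LinearOrder α] {s t : List α} (k : ℕ) (h : s ≤ t) :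
    s.take k ≤ t.take k :=
  not_lt.mp fun h' => not_lt.mpr h (List.lt_of_take_lt h')

theorem _root_.List.le_foldr_min_iff [LinearOrder α] {b c : α} (l : List α) :
    c ≤ l.foldr min b ↔ c ≤ b ∧ ∀ a ∈ l, c ≤ a := by
  induction l with
  | nil => simp
  | cons a l ih => simp [ih, and_left_comm]

lemma rot_eq_rotate (w : List α) (c : ℕ) : rot w c = w.rotate c :=
  List.rotate_eq_drop_append_take_mod.symm

section Order

variable [LinearOrder α]

lemma selfMinimal_iff {w : List α} : SelfMinimal w ↔ ∀ i < w.length, w ≤ w.rotate i := by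
  have hle : minrot w ≤ w := ((List.le_foldr_min_iff _).mp le_rfl).1
  rw [SelfMinimal, le_antisymm_iff, and_iff_right hle, minrot, List.le_foldr_min_iff]
  simp [rot_eq_rotate]

lemma selfMinimal_replicate (n : ℕ) (a : α) : SelfMinimal (List.replicate n a) :=
  selfMinimal_iff.mpr fun i _ => (List.rotate_replicate a n i).ge

lemma le_rotate_append_replicate {b z : α} (hbz : b < z) (p : List α) {k i : ℕ}
    (hp : (b :: p).length ≤ i) (hi : i < (b :: p).length + k) :
    b :: p ++ List.replicate k z ≤ (b :: p ++ List.replicate k z).rotate i := by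
  obtain ⟨t, ht⟩ := List.exists_rotate_append_replicate_eq_cons (b :: p) z hp hi
  rw [ht]
  exact (List.cons_lt_cons_iff.mpr (.inl hbz)).le

lemma selfMinimal_cons_replicate {z : α} (hz : ∀ a, a ≤ z) (d : α) (m : ℕ) :
    SelfMinimal (d :: List.replicate m z) := by
  rcases (hz d).lt_or_eq with hdz | rfl
  · refine selfMinimal_iff.mpr fun i hi => ?_
    rcases Nat.eq_zero_or_pos i with rfl | hi0
    · rw [List.rotate_zero]
    · simpa using le_rotate_append_replicate hdz [] (k := m) hi0 (by grind)
  · rw [← List.replicate_succ]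
    exact selfMinimal_replicate _ _

lemma lt_rotate_of_le_rotate {y u v : List α} {c d : α} {i : ℕ} (hcd : c < d) (hi : 0 < i)
    (hiy : i ≤ y.length) (h : y ++ c :: u ≤ (y ++ c :: u).rotate i) :
    y ++ d :: v < (y ++ d :: v).rotate i := by
  rw [List.rotate_append_of_le_length _ hiy] at h ⊢
  set k := y.length - i + 1 with hk_def
  have hk : k ≤ y.length := by omega
  have htake (e : α) (l : List α) : (y ++ e :: l).take k = y.take k :=
    List.take_append_of_le_length hk
  have hrot (e : α) (l : List α) : (y.drop i ++ e :: l ++ y.take i).take k = y.drop i ++ [e] := by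
    simp [k, List.take_append]
  apply List.lt_of_take_lt (k := k)
  rw [htake, hrot]
  calc y.take k ≤ y.drop i ++ [c] := by simpa only [htake, hrot] using List.take_le_take_of_le k h
    _ < y.drop i ++ [d] := List.append_left_lt (List.cons_lt_cons_iff.mpr (.inl hcd))

end Order

theorem stmt_1_general [LinearOrder α]
    (z : α) (hz : ∀ a : α, a ≤ z)
    (x x' y u v : List α) (c d : α)
    (hx : x = y ++ [c] ++ u) (hx' : x' = y ++ [d] ++ v)
    (hcd : c < d) (hv : v = List.replicate u.length z)
    (hsm : SelfMinimal x) :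
    SelfMinimal x' := by
  subst hx hx' hv
  simp only [List.append_assoc, List.singleton_append] at hsm ⊢
  rcases y with _ | ⟨a, y⟩
  · exact selfMinimal_cons_replicate hz d u.length
  rw [selfMinimal_iff] at hsm ⊢
  have hac : a ≤ c := by
    have h := hsm (a :: y).length (by simp)
    rw [List.rotate_append_length_eq] at h
    exact List.left_le_left_of_cons_le_cons (not_lt.mpr h)
  intro i hi
  rcases Nat.eq_zero_or_pos i with rfl | hi0
  · rw [List.rotate_zero]
  rcases le_or_gt i (a :: y).length with hiy | hiy
  · exact (lt_rotate_of_le_rotate hcd hi0 hiy (hsm i (by grind))).le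
  · simpa using le_rotate_append_replicate (hac.trans_lt (hcd.trans_le (hz d))) (y ++ [d])
      (k := u.length) (i := i) (by simpa using hiy) (by grind)

/-- Let `z` be the maximal letter. If `x = y·c·u` is self-minimal, `c < d` and
`v = z^{|u|}`, then `x' = y·d·v` is self-minimal. -/
theorem stmt_1 [LinearOrder α] [Fintype α] [Nonempty α]
    (z : α) (hz : ∀ a : α, a ≤ z)
    (x x' y u v : List α) (c d : α)
    (hx : x = y ++ [c] ++ u) (hx' : x' = y ++ [d] ++ v)
    (hcd : c < d) (hv : v = List.replicate u.length z)
    (hsm : SelfMinimal x) :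
    SelfMinimal x' :=
  stmt_1_general z hz x x' y u v c d hx hx' hcd hv hsm

end Lyndon
end

section
/- Let w be a self-minimal word of length n ≥ 1 over Σ, and let x be a word of length n such that x·x ∈ L(w) but x ∉ L(w). Then there exists a unique decomposition x = x₁·x₂·x₃ such that x₁ and x₃ are nonempty, x₃·x₁ ∈ Pref_-(w), and the word x₁·x₂ satisfies both: x₁·x₂ ∉ L(w), and no nonempty suffix of x₁·x₂ is a prefix of w. -/
namespace List

variable {α : Type*}

theorem prefix_or_prefix_or_exists_ne :
    ∀ a b : List α, a <+: b ∨ b <+: a ∨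
      ∃ p c d r s, c ≠ d ∧ a = p ++ c :: r ∧ b = p ++ d :: s
  | [], _ => Or.inl nil_prefix
  | _, [] => Or.inr (Or.inl nil_prefix)
  | c :: a, d :: b => by
    by_cases hcd : c = d
    · subst hcd
      rcases prefix_or_prefix_or_exists_ne a b with h | h | ⟨p, c', d', r, s, hne, rfl, rfl⟩
      · exact Or.inl (prefix_cons_inj c |>.2 h)
      · exact Or.inr (Or.inl (prefix_cons_inj c |>.2 h))
      · exact Or.inr (Or.inr ⟨c :: p, c', d', r, s, hne, rfl, rfl⟩)
    · exact Or.inr (Or.inr ⟨[], c, d, a, b, hcd, rfl, rfl⟩)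

theorem prefix_drop_of_prefix_drop_append {z x x' : List α} {k : ℕ}
    (h : z <+: (x ++ x').drop k) (hk : k + z.length ≤ x.length) : z <+: x.drop k := by
  rw [drop_append_of_le_length (by omega)] at h
  exact prefix_of_prefix_length_le h (prefix_append _ _) (by simp; omega)

theorem suffix_take_of_prefix_drop_append {z x x' : List α} {k : ℕ}
    (h : z <+: (x ++ x').drop k) (hk : k + z.length ≤ x.length) :
    z <:+ x.take (k + z.length) := by
  have hz := prefix_iff_eq_take.1 (prefix_drop_of_prefix_drop_append h hk)
  rw [take_add, ← hz]
  exact suffix_append _ _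

theorem eq_drop_append_take_of_prefix_drop_append {y x x' : List α} {k : ℕ}
    (h : y <+: (x ++ x').drop k) (hk : k ≤ x.length) (hy : x.length ≤ k + y.length) :
    y = x.drop k ++ x'.take (k + y.length - x.length) := by
  rw [prefix_iff_eq_take, drop_append_of_le_length hk, take_append] at h
  conv_lhs => rw [h]
  rw [take_of_length_le (by simp; omega)]
  simp
  omega

theorem take_append_drop_take (l : List α) {j k : ℕ} (h : j ≤ k) :
    l.take j ++ (l.take k).drop j = l.take k := by
  conv_rhs => rw [← take_append_drop j (l.take k), take_take, min_eq_left h]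

theorem foldr_min_le [LinearOrder α] {l : List α} {a : α} (b : α) (h : a ∈ l) :
    l.foldr min b ≤ a := by
  induction l with
  | nil => cases h
  | cons x xs ih =>
    rcases mem_cons.mp h with rfl | h
    · exact min_le_left _ _
    · exact (min_le_right _ _).trans (ih h)

end List

namespace Lyndon

variable {α : Type*}

section

variable [LinearOrder α] {w : List α}

theorem SelfMinimal.le_drop_append_take (hsm : SelfMinimal w) (m : ℕ) :
    w ≤ w.drop m ++ w.take m := by
  rcases lt_or_ge m w.length with hm | hm
  · have hrot : rot w m ∈ (List.range w.length).map (rot w) :=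
      List.mem_map_of_mem (List.mem_range.2 hm)
    have := List.foldr_min_le w hrot
    rwa [← minrot, hsm, rot, Nat.mod_eq_of_lt hm] at this
  · simp [List.drop_eq_nil_of_le hm, List.take_of_length_le hm]

theorem mem_PrefMinus_iff {y : List α} :
    y ∈ PrefMinus w ↔ y = w ∨ ∃ p c d r, c < d ∧ w = p ++ d :: r ∧ y = p ++ [c] := by
  constructor
  · rintro (⟨i, c, hc, rfl⟩ | rfl)
    · refine Or.inr ⟨w.take i, c, w.get i, w.drop (i + 1), hc, ?_, rfl⟩
      simp
    · exact Or.inl rfl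
  · rintro (rfl | ⟨p, c, d, r, hcd, rfl, rfl⟩)
    · exact Or.inr rfl
    · exact Or.inl ⟨⟨p.length, by simp⟩, c, by simpa using hcd, by simp⟩

theorem length_le_of_mem_PrefMinus {y : List α} (hy : y ∈ PrefMinus w) :
    y.length ≤ w.length := by
  rcases mem_PrefMinus_iff.1 hy with rfl | ⟨p, c, d, r, -, rfl, rfl⟩
  · rfl
  · simp

theorem append_lt_of_mem_PrefMinus {y : List α} (hy : y ∈ PrefMinus w) (hne : y ≠ w)
    (t : List α) : y ++ t < w := by
  rcases mem_PrefMinus_iff.1 hy with rfl | ⟨p, c, d, r, hcd, rfl, rfl⟩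
  · exact absurd rfl hne
  · simpa using List.append_left_lt (List.Lex.rel hcd : c :: t < d :: r)

theorem le_of_mem_PrefMinus {y : List α} (hy : y ∈ PrefMinus w) : y ≤ w := by
  by_cases hne : y = w
  · exact hne.le
  · simpa using (append_lt_of_mem_PrefMinus hy hne []).le

theorem eq_of_mem_PrefMinus_of_prefix {y : List α} (hy : y ∈ PrefMinus w) (h : y <+: w) :
    y = w := by
  rcases mem_PrefMinus_iff.1 hy with rfl | ⟨p, c, d, r, hcd, rfl, rfl⟩
  · rfl
  · simp at h
    exact absurd h hcd.ne

theorem prefix_of_prefix_of_mem_PrefMinus {y z : List α} (hy : y ∈ PrefMinus w) (hz : z <+: y)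
    (hlen : z.length < y.length) : z <+: w := by
  rcases mem_PrefMinus_iff.1 hy with rfl | ⟨p, c, d, r, -, rfl, rfl⟩
  · exact hz
  · have : z <+: p := List.prefix_of_prefix_length_le hz (List.prefix_append p [c])
      (by simp at hlen; omega)
    exact this.trans (List.prefix_append p _)

theorem eq_of_prefix_of_prefix_of_mem_PrefMinus {y y' z : List α} (hy : y ∈ PrefMinus w)
    (hy' : y' ∈ PrefMinus w) (hyz : y <+: z) (hy'z : y' <+: z) : y = y' := by
  wlog h : y <+: y' generalizing y y'
  · exact (this hy' hy hy'z hyz ((List.prefix_or_prefix_of_prefix hyz hy'z).resolve_left h)).symm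
  by_contra hne
  have hlt : y.length < y'.length := lt_of_le_of_ne h.length_le (mt h.eq_of_length hne)
  have hyw := eq_of_mem_PrefMinus_of_prefix hy (prefix_of_prefix_of_mem_PrefMinus hy' h hlt)
  have := length_le_of_mem_PrefMinus hy'
  rw [hyw] at hlt
  omega

def HasPrefMinusPrefix (w z : List α) : Prop :=
  ∃ y ∈ PrefMinus w, y <+: z

theorem HasPrefMinusPrefix.mono {z z' : List α} (h : HasPrefMinusPrefix w z) (hz : z <+: z') :
    HasPrefMinusPrefix w z' :=
  let ⟨y, hy, hyz⟩ := h; ⟨y, hy, hyz.trans hz⟩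

theorem SelfMinimal.hasPrefMinusPrefix_prefix_append (hsm : SelfMinimal w) {s y : List α}
    (hs : s <+: w) (hy : y ∈ PrefMinus w) : HasPrefMinusPrefix w (s ++ y) := by
  obtain ⟨u, rfl⟩ := hs
  -- compare `y` with `u`, where `w = s ++ u`; the rotation `u ++ s` is at least `w`
  have hrot := hsm.le_drop_append_take s.length
  rw [List.drop_left, List.take_left] at hrot
  rcases List.prefix_or_prefix_or_exists_ne u y with ⟨t, rfl⟩ | ⟨t, rfl⟩ |
    ⟨p, c, d, r, r', hcd, rfl, rfl⟩
  · exact ⟨s ++ u, mem_PrefMinus_iff.2 (Or.inl rfl), by simp⟩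
  · by_cases hne : y = s ++ (y ++ t)
    · obtain rfl : s = [] := by
        have := congrArg List.length hne
        simp only [List.length_append] at this
        exact List.eq_nil_of_length_eq_zero (by omega)
      exact ⟨y, hy, List.prefix_rfl⟩
    · exact absurd (append_lt_of_mem_PrefMinus hy hne (t ++ s)) (by simpa using hrot.not_gt)
  · rcases lt_or_gt_of_ne hcd with hlt | hlt
    · have hlt' : p ++ c :: (r ++ s) < p ++ d :: r' := List.append_left_lt (List.Lex.rel hlt)
      exact absurd (hlt'.trans_le (le_of_mem_PrefMinus hy)) (by simpa using hrot.not_gt)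
    · refine ⟨(s ++ p) ++ [d], mem_PrefMinus_iff.2 (Or.inr ⟨s ++ p, d, c, r, hlt, ?_, rfl⟩), ?_⟩
      all_goals simp

theorem InL.mono {a b : List α} (h : InL w a) (hab : a <:+: b) : InL w b :=
  let ⟨y, hy, hya⟩ := h; ⟨y, hy, hya.trans hab⟩

theorem inL_of_prefix_drop {x y : List α} {k : ℕ} (hy : y ∈ PrefMinus w) (h : y <+: x.drop k) :
    InL w x :=
  ⟨y, hy, h.isInfix.trans (List.drop_suffix k x).isInfix⟩

theorem InL.exists_hasPrefMinusPrefix_drop {x : List α} (h : InL w x) :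
    ∃ k, HasPrefMinusPrefix w (x.drop k) := by
  obtain ⟨y, hy, hyx⟩ := h
  obtain ⟨t, hyt, htx⟩ := List.infix_iff_prefix_suffix.1 hyx
  exact ⟨x.length - t.length, y, hy, List.suffix_iff_eq_drop.1 htx ▸ hyt⟩

theorem lt_and_lt_of_prefix_drop_append {x x' y : List α} {k : ℕ} (hx : ¬ InL w x)
    (hx' : ¬ InL w x') (hy : y ∈ PrefMinus w) (h : y <+: (x ++ x').drop k) :
    k < x.length ∧ x.length < k + y.length := by
  constructor
  · by_contra! hk
    rw [List.drop_append, List.drop_eq_nil_of_le hk, List.nil_append] at h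
    exact hx' (inL_of_prefix_drop hy h)
  · by_contra! hk
    exact hx (inL_of_prefix_drop hy (List.prefix_drop_of_prefix_drop_append h hk))

def IsSplitting (w x : List α) (q : List α × List α × List α) : Prop :=
  x = q.1 ++ q.2.1 ++ q.2.2 ∧ q.1 ≠ [] ∧ q.2.2 ≠ [] ∧ q.2.2 ++ q.1 ∈ PrefMinus w ∧
    ¬ InL w (q.1 ++ q.2.1) ∧ ∀ s : List α, s ≠ [] → s <:+ q.1 ++ q.2.1 → ¬ s <+: w

section LeastOccurrence

variable {x y : List α} {k : ℕ}

theorem not_prefix_of_suffix_take_of_isLeast (hsm : SelfMinimal w)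
    (hk : IsLeast {k | HasPrefMinusPrefix w ((x ++ x).drop k)} k) (hkx : k ≤ x.length)
    {s : List α} (hs : s ≠ []) (hsk : s <:+ x.take k) : ¬ s <+: w := by
  intro hsw
  obtain ⟨v, hv⟩ := hsk
  obtain ⟨y, hy, hyk⟩ := hk.1
  have hsplit : x ++ x = v ++ s ++ (x ++ x).drop k := by
    rw [hv, ← List.take_append_of_le_length hkx, List.take_append_drop]
  have hdrop : (x ++ x).drop v.length = s ++ (x ++ x).drop k := by
    conv_lhs => rw [hsplit]
    rw [List.append_assoc, List.drop_left]
  have hvk : k ≤ v.length := hk.2 <| by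
    rw [Set.mem_ofPred_eq, hdrop]
    exact (hsm.hasPrefMinusPrefix_prefix_append hsw hy).mono
      ((List.prefix_append_right_inj s).2 hyk)
  have hlen := congrArg List.length hv
  rw [List.length_append, List.length_take_of_le hkx] at hlen
  exact hs (List.eq_nil_of_length_eq_zero (by omega))

theorem isSplitting_of_isLeast (hsm : SelfMinimal w) (hx : ¬ InL w x)
    (hk : IsLeast {k | HasPrefMinusPrefix w ((x ++ x).drop k)} k) (hy : y ∈ PrefMinus w)
    (hyk : y <+: (x ++ x).drop k) (hxw : w.length = x.length) :
    IsSplitting w x (x.take (k + y.length - x.length), (x.take k).drop (k + y.length - x.length),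
      x.drop k) := by
  obtain ⟨hkx, hxy⟩ := lt_and_lt_of_prefix_drop_append hx hx hy hyk
  have hyw := length_le_of_mem_PrefMinus hy
  have htake := x.take_append_drop_take (j := k + y.length - x.length) (k := k) (by omega)
  refine ⟨?_, ?_, ?_, ?_, ?_, ?_⟩ <;> dsimp only
  · rw [htake, List.take_append_drop]
  · exact List.ne_nil_of_length_pos (by simp; omega)
  · exact List.ne_nil_of_length_pos (by simp; omega)
  · rwa [← List.eq_drop_append_take_of_prefix_drop_append hyk hkx.le hxy.le]
  · rw [htake]
    exact fun h => hx (h.mono (List.take_prefix k x).isInfix)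
  · rw [htake]
    exact fun s hs hsk => not_prefix_of_suffix_take_of_isLeast hsm hk hkx.le hs hsk

theorem IsSplitting.eq_of_isLeast {q : List α × List α × List α} (hq : IsSplitting w x q)
    (hx : ¬ InL w x) (hk : IsLeast {k | HasPrefMinusPrefix w ((x ++ x).drop k)} k)
    (hy : y ∈ PrefMinus w) (hyk : y <+: (x ++ x).drop k) (hxw : w.length = x.length) :
    q = (x.take (k + y.length - x.length), (x.take k).drop (k + y.length - x.length),
      x.drop k) := by
  obtain ⟨q1, q2, q3⟩ := q
  obtain ⟨hxq, -, -, hq31, -, hsuf⟩ := hq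
  dsimp only at hxq hq31 hsuf
  obtain ⟨hkx, hxy⟩ := lt_and_lt_of_prefix_drop_append hx hx hy hyk
  have hyw := length_le_of_mem_PrefMinus hy
  set K := (q1 ++ q2).length
  have htakeK : x.take K = q1 ++ q2 := by rw [hxq]; exact List.take_left
  have hdropK : x.drop K = q3 := by rw [hxq]; exact List.drop_left
  have hKx : K ≤ x.length := by simp only [K, hxq, List.length_append]; omega
  have hprefK : q3 ++ q1 <+: (x ++ x).drop K := by
    rw [List.drop_append_of_le_length hKx, hdropK, List.prefix_append_right_inj, hxq,
      List.append_assoc]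
    exact List.prefix_append _ _
  have hkK : k = K := by
    by_contra hne
    have hlt : k < K := lt_of_le_of_ne (hk.2 ⟨_, hq31, hprefK⟩) hne
    set z := y.take (K - k)
    have hzlen : z.length = K - k := by simp [z]; omega
    have hz : z <+: (x ++ x).drop k := (List.take_prefix _ _).trans hyk
    refine hsuf z (List.ne_nil_of_length_pos (by omega)) ?_
      (prefix_of_prefix_of_mem_PrefMinus hy (List.take_prefix _ _) (by omega))
    have := List.suffix_take_of_prefix_drop_append hz (by omega)
    rwa [hzlen, Nat.add_sub_cancel' hlt.le, htakeK] at this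
  rw [← hkK] at htakeK hdropK hprefK
  have hq31y : q3 ++ q1 = x.drop k ++ x.take (k + y.length - x.length) := by
    rw [eq_of_prefix_of_prefix_of_mem_PrefMinus hq31 hy hprefK hyk]
    exact List.eq_drop_append_take_of_prefix_drop_append hyk hkx.le hxy.le
  rw [← hdropK] at hq31y ⊢
  have hq1 := List.append_cancel_left hq31y
  have hq2 : q1 ++ q2 = q1 ++ (x.take k).drop (k + y.length - x.length) := by
    rw [← htakeK, hq1, x.take_append_drop_take (by omega)]
  rw [hq1, List.append_cancel_left hq2]

end LeastOccurrence

theorem existsUnique_isSplitting (hsm : SelfMinimal w) {x : List α} (hxx : InL w (x ++ x))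
    (hx : ¬ InL w x) (hxw : w.length = x.length) : ∃! q, IsSplitting w x q := by
  have hk := isLeast_csInf hxx.exists_hasPrefMinusPrefix_drop
  obtain ⟨y, hy, hyk⟩ := hk.1
  exact ⟨_, isSplitting_of_isLeast hsm hx hk hy hyk hxw,
    fun q hq => hq.eq_of_isLeast hx hk hy hyk hxw⟩

end

theorem stmt_13_general [LinearOrder α]
    (w x : List α) (n : ℕ) (hw : w.length = n) (hsm : SelfMinimal w)
    (hx : x.length = n) (hxx : InL w (x ++ x)) (hxnot : ¬ InL w x) :
    ∃! p : List α × List α × List α,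
      x = p.1 ++ p.2.1 ++ p.2.2 ∧ p.1 ≠ [] ∧ p.2.2 ≠ [] ∧
      (p.2.2 ++ p.1) ∈ PrefMinus w ∧
      ¬ InL w (p.1 ++ p.2.1) ∧
      ∀ s : List α, s ≠ [] → s <:+ p.1 ++ p.2.1 → ¬ s <+: w :=
  existsUnique_isSplitting hsm hxx hxnot (hw.trans hx.symm)

/-- For self-minimal `w` of length `n ≥ 1` and `x` of length `n` with `x·x ∈ L(w)`
but `x ∉ L(w)`, there is a unique decomposition `x = x₁·x₂·x₃` with `x₁, x₃` nonempty,
`x₃·x₁ ∈ Pref₋(w)`, `x₁·x₂ ∉ L(w)`, and no nonempty suffix of `x₁·x₂` being a prefix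
of `w`. -/
theorem stmt_13 [LinearOrder α] [Fintype α] [Nonempty α]
    (w x : List α) (n : ℕ) (hn : 1 ≤ n) (hw : w.length = n) (hsm : SelfMinimal w)
    (hx : x.length = n) (hxx : InL w (x ++ x)) (hxnot : ¬ InL w x) :
    ∃! p : List α × List α × List α,
      x = p.1 ++ p.2.1 ++ p.2.2 ∧ p.1 ≠ [] ∧ p.2.2 ≠ [] ∧
      (p.2.2 ++ p.1) ∈ PrefMinus w ∧
      ¬ InL w (p.1 ++ p.2.1) ∧
      ∀ s : List α, s ≠ [] → s <:+ p.1 ++ p.2.1 → ¬ s <+: w :=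
  stmt_13_general w x n hw hsm hx hxx hxnot

end Lyndon
end
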